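/- arXiv:2410.23061 — 2 statements merged into one kernel-verified Lean document; each statement's English description precedes it below -/
import Mathlib

section
/- Under the assumptions ‖A − A^η‖ ≤ η, ‖y − y^δ‖ ≤ δ, and ρ > 0, for any w ∈ Y the restricted solution set M^ρ = {z ∈ X : A z = y, ‖z‖ < ρ} is contained in the stripe H((A^η)* w, ⟨w, y^δ⟩, (δ + η ρ)‖w‖) = {x ∈ X : |⟨(A^η)* w, x⟩ − ⟨w, y^δ⟩| ≤ (δ + η ρ)‖w‖}. -/
open scoped InnerProductSpace

/-- The restricted solution set is contained in the stripe
`H((A^η)* w, ⟨w, y^δ⟩, (δ + η ρ)‖w‖)`. -/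
theorem restricted_solution_set_subset_stripe
    {X Y : Type*} [NormedAddCommGroup X] [InnerProductSpace ℝ X] [CompleteSpace X]
    [NormedAddCommGroup Y] [InnerProductSpace ℝ Y] [CompleteSpace Y]
    (A Aη : X →L[ℝ] Y) (η δ ρ : ℝ) (y yδ : Y)
    (hη : ‖A - Aη‖ ≤ η) (hδ : ‖y - yδ‖ ≤ δ) (hρ : 0 < ρ) (w : Y) :
    {z : X | A z = y ∧ ‖z‖ < ρ} ⊆
      {x : X | |⟪(ContinuousLinearMap.adjoint Aη) w, x⟫_ℝ - ⟪w, yδ⟫_ℝ| ≤ (δ + η * ρ) * ‖w‖} := by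
  rintro z ⟨hz, hzρ⟩
  simp only [Set.mem_setOf_eq]
  have key : ⟪(ContinuousLinearMap.adjoint Aη) w, z⟫_ℝ - ⟪w, yδ⟫_ℝ
      = ⟪w, (Aη - A) z + (y - yδ)⟫_ℝ := by
    rw [ContinuousLinearMap.adjoint_inner_left]
    simp [inner_add_right, inner_sub_right, hz]
  rw [key]
  calc |⟪w, (Aη - A) z + (y - yδ)⟫_ℝ| ≤ ‖w‖ * ‖(Aη - A) z + (y - yδ)‖ :=
        abs_real_inner_le_norm _ _
    _ ≤ ‖w‖ * (η * ρ + δ) := by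
        apply mul_le_mul_of_nonneg_left _ (norm_nonneg w)
        refine (norm_add_le _ _).trans (add_le_add ?_ hδ)
        calc ‖(Aη - A) z‖ ≤ ‖Aη - A‖ * ‖z‖ := (Aη - A).le_opNorm z
          _ ≤ η * ρ := by
              apply mul_le_mul _ hzρ.le (norm_nonneg z)
                ((norm_nonneg (Aη - A)).trans _)
              · rwa [← norm_neg, neg_sub]
              · rwa [← norm_neg, neg_sub]
    _ = (δ + η * ρ) * ‖w‖ := by ring
end

section
/- Let A_i : X → Y_i, s ∈ X, y_i ∈ Y_i, w_i = A_i s − y_i ≠ 0, u_i = A_i* w_i ≠ 0, and suppose w_i ⟨A_i A_i* w_i, w_i⟩ = ‖w_i‖² A_i u_i (as elements of Y_i). Then with κ_i = (‖w_i‖² − E_i‖w_i‖)/‖u_i‖² and 0 ≤ E_i ≤ ‖w_i‖, one has ‖y_i − A_i(s − κ_i u_i)‖ = E_i. -/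
open scoped InnerProductSpace

/-!
Since `⟪A (A† w), w⟫ = ‖A† w‖²`, the hypothesis says that `A u = (‖u‖² / ‖w‖²) • w`: the step
along `u` moves the residual only along `w`. The new residual is then
`(κ ‖u‖² / ‖w‖² - 1) • w = -(E / ‖w‖) • w`, whose norm is `E`.
-/

theorem sub_map_sub_smul_eq_smul_of_map_eq_smul {R M N F : Type*} [CommRing R]
    [AddCommGroup M] [Module R M] [AddCommGroup N] [Module R N]
    [FunLike F M N] [LinearMapClass F R M N] (A : F) {s u : M} {y w : N} {t κ : R}
    (hw : w = A s - y) (hu : A u = t • w) :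
    y - A (s - κ • u) = (κ * t - 1) • w := by
  rw [map_sub, map_smul, hu, smul_smul, hw]
  module

theorem norm_smul_div_norm_self {E : Type*} [NormedAddCommGroup E] [NormedSpace ℝ E]
    {r : ℝ} (hr : 0 ≤ r) {w : E} (hw : w ≠ 0) : ‖(r / ‖w‖) • w‖ = r := by
  rw [norm_smul, Real.norm_of_nonneg (by positivity), div_mul_cancel₀ _ (norm_ne_zero_iff.mpr hw)]

namespace ContinuousLinearMap

variable {X Y : Type*} [NormedAddCommGroup X] [InnerProductSpace ℝ X] [CompleteSpace X]
  [NormedAddCommGroup Y] [InnerProductSpace ℝ Y] [CompleteSpace Y]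

theorem inner_apply_adjoint_apply_self (A : X →L[ℝ] Y) (w : Y) :
    ⟪A (adjoint A w), w⟫_ℝ = ‖adjoint A w‖ ^ 2 := by
  rw [← adjoint_inner_right, real_inner_self_eq_norm_sq]

theorem apply_adjoint_apply_eq_smul (A : X →L[ℝ] Y) {w : Y} (hw : w ≠ 0)
    (h : ⟪A (adjoint A w), w⟫_ℝ • w = ‖w‖ ^ 2 • A (adjoint A w)) :
    A (adjoint A w) = (‖adjoint A w‖ ^ 2 / ‖w‖ ^ 2) • w := by
  have hw2 : ‖w‖ ^ 2 ≠ 0 := pow_ne_zero 2 (norm_ne_zero_iff.mpr hw)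
  rw [div_eq_inv_mul, ← smul_smul, ← inner_apply_adjoint_apply_self, h, inv_smul_smul₀ hw2]

end ContinuousLinearMap

theorem metric_projection_one_step_general_general
    {X Yi : Type*} [NormedAddCommGroup X] [InnerProductSpace ℝ X] [CompleteSpace X]
    [NormedAddCommGroup Yi] [InnerProductSpace ℝ Yi] [CompleteSpace Yi]
    (Ai : X →L[ℝ] Yi) (s : X) (yi : Yi) (wi : Yi) (ui : X) (Ei : ℝ)
    (hwi : wi = Ai s - yi) (hwne : wi ≠ 0)
    (hui : ui = (ContinuousLinearMap.adjoint Ai) wi) (hune : ui ≠ 0)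
    (hkey : ⟪Ai ((ContinuousLinearMap.adjoint Ai) wi), wi⟫_ℝ • wi = ‖wi‖ ^ 2 • Ai ui)
    (hE0 : 0 ≤ Ei) :
    ‖yi - Ai (s - ((‖wi‖ ^ 2 - Ei * ‖wi‖) / ‖ui‖ ^ 2) • ui)‖ = Ei := by
  subst hui
  have hAu := Ai.apply_adjoint_apply_eq_smul hwne hkey
  have hstep : (‖wi‖ ^ 2 - Ei * ‖wi‖) / ‖Ai.adjoint wi‖ ^ 2 *
      (‖Ai.adjoint wi‖ ^ 2 / ‖wi‖ ^ 2) = 1 - Ei / ‖wi‖ := by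
    have hu : ‖Ai.adjoint wi‖ ≠ 0 := norm_ne_zero_iff.mpr hune
    have hw : ‖wi‖ ≠ 0 := norm_ne_zero_iff.mpr hwne
    field_simp
  rw [sub_map_sub_smul_eq_smul_of_map_eq_smul Ai hwi hAu, hstep, sub_sub_cancel_left,
    neg_smul, norm_neg, norm_smul_div_norm_self hE0 hwne]

/-- Under the condition `w_i ⟨A_i A_i* w_i, w_i⟩ = ‖w_i‖² A_i u_i`, the metric
projection stepsize achieves the prescribed residual level `E_i`. -/
theorem metric_projection_one_step_general
    {X Yi : Type*} [NormedAddCommGroup X] [InnerProductSpace ℝ X] [CompleteSpace X]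
    [NormedAddCommGroup Yi] [InnerProductSpace ℝ Yi] [CompleteSpace Yi]
    (Ai : X →L[ℝ] Yi) (s : X) (yi : Yi) (wi : Yi) (ui : X) (Ei : ℝ)
    (hwi : wi = Ai s - yi) (hwne : wi ≠ 0)
    (hui : ui = (ContinuousLinearMap.adjoint Ai) wi) (hune : ui ≠ 0)
    (hkey : ⟪Ai ((ContinuousLinearMap.adjoint Ai) wi), wi⟫_ℝ • wi = ‖wi‖ ^ 2 • Ai ui)
    (hE0 : 0 ≤ Ei) (hEw : Ei ≤ ‖wi‖) :
    ‖yi - Ai (s - ((‖wi‖ ^ 2 - Ei * ‖wi‖) / ‖ui‖ ^ 2) • ui)‖ = Ei :=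
  metric_projection_one_step_general_general Ai s yi wi ui Ei hwi hwne hui hune hkey hE0
end
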